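/- (The central unitary extension.) Let H0 be a complex Hilbert space, D, D* closed subspaces, V : D → D* a surjective linear isometry, Δ = H0 ⊖ D, Δ* = H0 ⊖ D*. On K0 = H0 ⊕ ℓ²(ℕ, Δ) ⊕ ℓ²(ℕ, Δ*) define W(h, x, y) = (V(P_D h) + y(0), (P_Δ h)·e0 + S x, S* y), where S is the unilateral forward shift, S* the backward shift, and (P_Δ h)·e0 denotes the sequence supported at index 0 with value P_Δ h. Then: (i) W is a unitary operator on K0; (ii) W(d, 0, 0) = (V d, 0, 0) for all d ∈ D, so W extends V; (iii) W is a minimal unitary extension of V, i.e. the smallest closed subspace of K0 containing H0 ⊕ {0} ⊕ {0} and invariant for both W and W* is all of K0; (iv) W maps the subspace {(δ, 0, 0) : δ ∈ Δ} onto {(0, δ·e0, 0) : δ ∈ Δ} and maps {(0, 0, δ*·e0) : δ* ∈ Δ*} onto {(δ*, 0, 0) : δ* ∈ Δ*}. -/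

import Mathlib

/-!
On `H ⊕ ℓ²(Δ) ⊕ ℓ²(Δ*)` the operator acts as `V ⊕ (Δ ↪ 0-th coordinate)` on `H = D ⊕ Δ`,
as the forward shift on `ℓ²(Δ)`, and as the backward shift on `ℓ²(Δ*)`, whose dropped
0-th coordinate is sent into `Δ* ⊆ H`. Norm preservation is Pythagoras for `H = D ⊕ Δ`,
`H = D* ⊕ Δ*` and the head/tail splitting of `ℓ²`; the inverse is read off coordinatewise.
For minimality, forward iterates of `Δ ⊆ H` give every single-entry sequence of `ℓ²(Δ)`,
backward iterates of `Δ* ⊆ H` every single-entry sequence of `ℓ²(Δ*)`, and these sequences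
span dense subspaces.
-/

open ContinuousLinearMap

open scoped ENNReal

theorem Set.image_setOf_exists_eq_of_forall {α β γ : Type*} {f : α → β} {g : γ → α}
    {g' : γ → β} (h : ∀ c, f (g c) = g' c) :
    f '' {a | ∃ c, a = g c} = {b | ∃ c, b = g' c} := by
  ext b
  constructor
  · rintro ⟨_, ⟨c, rfl⟩, rfl⟩
    exact ⟨c, h c⟩
  · rintro ⟨c, rfl⟩
    exact ⟨g c, ⟨c, rfl⟩, h c⟩

namespace lp

section

variable {α : Type*} {E : α → Type*} [∀ i, NormedAddCommGroup (E i)]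

theorem summable_norm_sq (f : lp E 2) : Summable fun i => ‖f i‖ ^ 2 := by
  simpa using (lp.memℓp f).summable (p := 2) (by norm_num)

theorem norm_sq_eq_tsum (f : lp E 2) : ‖f‖ ^ 2 = ∑' i, ‖f i‖ ^ 2 := by
  simpa using lp.norm_rpow_eq_tsum (p := 2) (by norm_num) f

theorem mem_of_isClosed_of_forall_single_mem [DecidableEq α] {p : ℝ≥0∞} [Fact (1 ≤ p)]
    (hp : p ≠ ⊤) {S : AddSubgroup (lp E p)} (hS : IsClosed (S : Set (lp E p)))
    (hsingle : ∀ i a, lp.single p i a ∈ S) (f : lp E p) : f ∈ S :=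
  hS.mem_of_tendsto (lp.hasSum_single hp f)
    (Filter.Eventually.of_forall fun _ => S.sum_mem fun i _ => hsingle i (f i))

end

variable {E : Type*} [NormedAddCommGroup E]

-- `tail` is the backward shift `S*` and `cons 0` the forward shift `S`.
def tail (f : lp (fun _ : ℕ => E) 2) : lp (fun _ : ℕ => E) 2 :=
  ⟨fun n => f (n + 1), memℓp_gen <| by
    simpa using (summable_nat_add_iff 1).2 (summable_norm_sq f)⟩

def cons (a : E) (f : lp (fun _ : ℕ => E) 2) : lp (fun _ : ℕ => E) 2 :=
  ⟨fun n => Nat.casesOn n a f, memℓp_gen <| (summable_nat_add_iff 1).1 <| by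
    simpa using summable_norm_sq f⟩

@[simp] theorem tail_apply (f : lp (fun _ : ℕ => E) 2) (n : ℕ) : tail f n = f (n + 1) := rfl

@[simp] theorem cons_apply_zero (a : E) (f : lp (fun _ : ℕ => E) 2) : cons a f 0 = a := rfl

@[simp] theorem cons_apply_succ (a : E) (f : lp (fun _ : ℕ => E) 2) (n : ℕ) :
    cons a f (n + 1) = f n := rfl

@[simp] theorem tail_cons (a : E) (f : lp (fun _ : ℕ => E) 2) : tail (cons a f) = f := rfl

@[simp] theorem cons_head_tail (f : lp (fun _ : ℕ => E) 2) : cons (f 0) (tail f) = f :=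
  lp.ext <| funext fun n => by cases n <;> rfl

@[simp] theorem cons_zero_zero : cons (0 : E) 0 = 0 :=
  lp.ext <| funext fun n => by cases n <;> rfl

@[simp] theorem tail_zero : tail (0 : lp (fun _ : ℕ => E) 2) = 0 := rfl

theorem cons_zero_eq_single (a : E) : cons a 0 = lp.single 2 0 a :=
  lp.ext <| funext fun n => by cases n <;> simp

theorem cons_zero_single (n : ℕ) (a : E) : cons 0 (lp.single 2 n a) = lp.single 2 (n + 1) a :=
  lp.ext <| funext fun k => by cases k <;> simp [Pi.single_apply]

theorem tail_single_zero (a : E) : tail (lp.single 2 0 a) = 0 :=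
  lp.ext <| funext fun n => by simp

theorem tail_single_succ (n : ℕ) (a : E) : tail (lp.single 2 (n + 1) a) = lp.single 2 n a :=
  lp.ext <| funext fun k => by simp [Pi.single_apply]

theorem norm_sq_eq_norm_sq_head_add_norm_sq_tail (f : lp (fun _ : ℕ => E) 2) :
    ‖f‖ ^ 2 = ‖f 0‖ ^ 2 + ‖tail f‖ ^ 2 := by
  rw [norm_sq_eq_tsum, norm_sq_eq_tsum, (summable_norm_sq f).tsum_eq_zero_add]
  rfl

theorem norm_sq_cons (a : E) (f : lp (fun _ : ℕ => E) 2) :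
    ‖cons a f‖ ^ 2 = ‖a‖ ^ 2 + ‖f‖ ^ 2 :=
  norm_sq_eq_norm_sq_head_add_norm_sq_tail (cons a f)

end lp

section CentralExtension

variable {𝕜 H : Type*} [RCLike 𝕜] [NormedAddCommGroup H] [InnerProductSpace 𝕜 H]
  {D Dst : Submodule 𝕜 H} [CompleteSpace D]

local notation "K" => H × lp (fun _ : ℕ => Dᗮ) 2 × lp (fun _ : ℕ => Dstᗮ) 2

noncomputable def centralExtension (V : D ≃ₗᵢ[𝕜] Dst) (p : K) : K :=
  ((V (D.orthogonalProjectionOnto p.1) : H) + (p.2.2 0 : H),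
    lp.cons (Dᗮ.orthogonalProjectionOnto p.1) p.2.1, lp.tail p.2.2)

variable (V : D ≃ₗᵢ[𝕜] Dst)

theorem centralExtension_apply_of_mem (d : D) :
    centralExtension V ((d : H), 0, 0) = ((V d : H), 0, 0) := by
  simp [centralExtension, Submodule.orthogonalProjectionOnto_mem_subspace_eq_self,
    Submodule.orthogonalProjectionOnto_orthogonal_apply_eq_zero d.2]

theorem centralExtension_apply_of_mem_orthogonal (δ : Dᗮ) :
    centralExtension V ((δ : H), 0, 0) = (0, lp.single 2 0 δ, 0) := by
  simp [centralExtension, Submodule.orthogonalProjectionOnto_apply_of_mem_orthogonal δ.2,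
    Submodule.orthogonalProjectionOnto_mem_subspace_eq_self, lp.cons_zero_eq_single]

theorem centralExtension_mid_single (n : ℕ) (δ : Dᗮ) :
    centralExtension V (0, lp.single 2 n δ, 0) = (0, lp.single 2 (n + 1) δ, 0) := by
  simp [centralExtension, lp.cons_zero_single]

theorem centralExtension_last_single_zero (ε : Dstᗮ) :
    centralExtension V (0, 0, lp.single 2 0 ε) = ((ε : H), 0, 0) := by
  simp [centralExtension, lp.tail_single_zero, lp.cons_zero_eq_single]

theorem centralExtension_last_single_succ (n : ℕ) (ε : Dstᗮ) :
    centralExtension V (0, 0, lp.single 2 (n + 1) ε) = (0, 0, lp.single 2 n ε) := by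
  simp [centralExtension, lp.tail_single_succ, lp.cons_zero_eq_single]

theorem norm_sq_centralExtension (p : K) :
    ‖(centralExtension V p).1‖ ^ 2 + ‖(centralExtension V p).2.1‖ ^ 2
        + ‖(centralExtension V p).2.2‖ ^ 2 = ‖p.1‖ ^ 2 + ‖p.2.1‖ ^ 2 + ‖p.2.2‖ ^ 2 := by
  obtain ⟨h, x, y⟩ := p
  have hfirst : ‖(V (D.orthogonalProjectionOnto h) : H) + (y 0 : H)‖ ^ 2
      = ‖D.orthogonalProjectionOnto h‖ ^ 2 + ‖y 0‖ ^ 2 := by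
    rw [sq, sq, sq, norm_add_sq_eq_norm_sq_add_norm_sq_of_inner_eq_zero _ _
      (Submodule.inner_right_of_mem_orthogonal (V _).2 (y 0).2)]
    simp only [Submodule.norm_coe, LinearIsometryEquiv.norm_map]
  have hmid := lp.norm_sq_cons (Dᗮ.orthogonalProjectionOnto h) x
  have hlast := lp.norm_sq_eq_norm_sq_head_add_norm_sq_tail y
  have hproj := Submodule.norm_sq_eq_add_norm_sq_projection h D
  change ‖_ + _‖ ^ 2 + ‖lp.cons _ x‖ ^ 2 + ‖lp.tail y‖ ^ 2 = _
  linarith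

theorem centralExtension_surjective [CompleteSpace Dst] :
    Function.Surjective (centralExtension V) := by
  rintro ⟨k, u, v⟩
  set a : D := V.symm (Dst.orthogonalProjectionOnto k)
  have hD : D.orthogonalProjectionOnto ((a : H) + (u 0 : H)) = a := by
    rw [map_add, Submodule.orthogonalProjectionOnto_mem_subspace_eq_self,
      Submodule.orthogonalProjectionOnto_apply_of_mem_orthogonal (u 0).2, add_zero]
  have hDorth : Dᗮ.orthogonalProjectionOnto ((a : H) + (u 0 : H)) = u 0 := by
    rw [map_add, Submodule.orthogonalProjectionOnto_mem_subspace_eq_self,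
      Submodule.orthogonalProjectionOnto_orthogonal_apply_eq_zero a.2, zero_add]
  refine ⟨((a : H) + (u 0 : H), lp.tail u, lp.cons (Dstᗮ.orthogonalProjectionOnto k) v), ?_⟩
  simp only [centralExtension, hD, hDorth, a, V.apply_symm_apply, lp.cons_head_tail,
    lp.tail_cons, lp.cons_apply_zero]
  exact Prod.ext (Dst.starProjection_add_starProjection_orthogonal k) rfl

theorem centralExtension_minimal (S : Submodule 𝕜 K) (hS : IsClosed (S : Set K))
    (hH : ∀ h : H, (h, (0 : lp (fun _ : ℕ => Dᗮ) 2), (0 : lp (fun _ : ℕ => Dstᗮ) 2)) ∈ S)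
    (hfwd : ∀ p ∈ S, centralExtension V p ∈ S) (hbwd : ∀ p, centralExtension V p ∈ S → p ∈ S) :
    S = ⊤ := by
  have hmid : ∀ x, ((0 : H), x, (0 : lp (fun _ : ℕ => Dstᗮ) 2)) ∈ S := by
    let L := (inr 𝕜 H _).comp (inl 𝕜 (lp (fun _ : ℕ => Dᗮ) 2) (lp (fun _ : ℕ => Dstᗮ) 2))
    refine lp.mem_of_isClosed_of_forall_single_mem (S := (S.comap L.toLinearMap).toAddSubgroup)
      ENNReal.ofNat_ne_top (hS.preimage L.continuous) fun n δ => ?_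
    induction n generalizing δ with
    | zero => simpa [L, centralExtension_apply_of_mem_orthogonal] using hfwd _ (hH δ)
    | succ n ih => simpa [L, centralExtension_mid_single] using hfwd _ (ih δ)
  have hlast : ∀ y, ((0 : H), (0 : lp (fun _ : ℕ => Dᗮ) 2), y) ∈ S := by
    let L := (inr 𝕜 H _).comp (inr 𝕜 (lp (fun _ : ℕ => Dᗮ) 2) (lp (fun _ : ℕ => Dstᗮ) 2))
    refine lp.mem_of_isClosed_of_forall_single_mem (S := (S.comap L.toLinearMap).toAddSubgroup)
      ENNReal.ofNat_ne_top (hS.preimage L.continuous) fun n ε => ?_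
    induction n generalizing ε with
    | zero => exact hbwd _ (by simpa [L, centralExtension_last_single_zero] using hH ε)
    | succ n ih => exact hbwd _ (by simpa [L, centralExtension_last_single_succ] using ih ε)
  refine Submodule.eq_top_iff'.2 fun ⟨h, x, y⟩ => ?_
  have hsplit : ((h, x, y) : K) = (h, 0, 0) + (0, x, 0) + (0, 0, y) := by simp
  rw [hsplit]
  exact S.add_mem (S.add_mem (hH h) (hmid x)) (hlast y)

end CentralExtension

theorem stmt_15_general {H0 : Type*}
    [NormedAddCommGroup H0] [InnerProductSpace ℂ H0]
    (D Dst : Submodule ℂ H0) [CompleteSpace D] [CompleteSpace Dst]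
    (V : D ≃ₗᵢ[ℂ] Dst)
    (W : (H0 × lp (fun _ : ℕ => Dᗮ) 2 × lp (fun _ : ℕ => Dstᗮ) 2) →L[ℂ]
         (H0 × lp (fun _ : ℕ => Dᗮ) 2 × lp (fun _ : ℕ => Dstᗮ) 2))
    (hW : ∀ p : H0 × lp (fun _ : ℕ => Dᗮ) 2 × lp (fun _ : ℕ => Dstᗮ) 2,
      (W p).1 = ((V (D.orthogonalProjectionOnto p.1) : Dst) : H0) + ((p.2.2 0 : Dstᗮ) : H0) ∧
      (W p).2.1 0 = Dᗮ.orthogonalProjectionOnto p.1 ∧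
      (∀ n : ℕ, (W p).2.1 (n + 1) = p.2.1 n) ∧
      (∀ n : ℕ, (W p).2.2 n = p.2.2 (n + 1))) :
    -- (i) `W` is a unitary operator on `K0`
    ((∀ p : H0 × lp (fun _ : ℕ => Dᗮ) 2 × lp (fun _ : ℕ => Dstᗮ) 2,
        ‖(W p).1‖ ^ 2 + ‖(W p).2.1‖ ^ 2 + ‖(W p).2.2‖ ^ 2
          = ‖p.1‖ ^ 2 + ‖p.2.1‖ ^ 2 + ‖p.2.2‖ ^ 2) ∧
      Function.Surjective W) ∧
    -- (ii) `W` extends `V`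
    (∀ d : D, W ((d : H0), 0, 0) = (((V d : Dst) : H0), 0, 0)) ∧
    -- (iii) `W` is a minimal unitary extension of `V`
    (∀ S : Submodule ℂ (H0 × lp (fun _ : ℕ => Dᗮ) 2 × lp (fun _ : ℕ => Dstᗮ) 2),
        IsClosed (S : Set (H0 × lp (fun _ : ℕ => Dᗮ) 2 × lp (fun _ : ℕ => Dstᗮ) 2)) →
        (∀ h : H0, (h, (0 : lp (fun _ : ℕ => Dᗮ) 2), (0 : lp (fun _ : ℕ => Dstᗮ) 2)) ∈ S) →
        (∀ p ∈ S, W p ∈ S) →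
        (∀ p, W p ∈ S → p ∈ S) →
        S = ⊤) ∧
    -- (iv) the subspace identities
    (W '' {p : H0 × lp (fun _ : ℕ => Dᗮ) 2 × lp (fun _ : ℕ => Dstᗮ) 2 |
          ∃ δ : Dᗮ, p = ((δ : H0), 0, 0)}
        = {p : H0 × lp (fun _ : ℕ => Dᗮ) 2 × lp (fun _ : ℕ => Dstᗮ) 2 |
          ∃ δ : Dᗮ, p = (0, (lp.single 2 0 δ : lp (fun _ : ℕ => Dᗮ) 2), 0)} ∧
      W '' {p : H0 × lp (fun _ : ℕ => Dᗮ) 2 × lp (fun _ : ℕ => Dstᗮ) 2 |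
          ∃ ε : Dstᗮ, p = (0, 0, (lp.single 2 0 ε : lp (fun _ : ℕ => Dstᗮ) 2))}
        = {p : H0 × lp (fun _ : ℕ => Dᗮ) 2 × lp (fun _ : ℕ => Dstᗮ) 2 |
          ∃ ε : Dstᗮ, p = ((ε : H0), 0, 0)}) := by
  have hWV : ⇑W = centralExtension V := funext fun p => by
    obtain ⟨h1, h2, h3, h4⟩ := hW p
    refine Prod.ext h1 (Prod.ext (lp.ext (funext fun n => ?_)) (lp.ext (funext h4)))
    cases n
    · exact h2
    · exact h3 _
  rw [hWV]
  refine ⟨⟨norm_sq_centralExtension V, centralExtension_surjective V⟩,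
    centralExtension_apply_of_mem V, centralExtension_minimal V, ?_, ?_⟩
  · exact Set.image_setOf_exists_eq_of_forall (centralExtension_apply_of_mem_orthogonal V)
  · exact Set.image_setOf_exists_eq_of_forall (centralExtension_last_single_zero V)

/-- **The central unitary extension.**
Let `V : D → D*` be a surjective linear isometry between closed subspaces of a Hilbert
space `H0`, `Δ = H0 ⊖ D`, `Δ* = H0 ⊖ D*`.  On `K0 = H0 ⊕ ℓ²(ℕ,Δ) ⊕ ℓ²(ℕ,Δ*)` the operator
`W(h, x, y) = (V(P_D h) + y(0), (P_Δ h)·e₀ + Sx, S*y)` is a unitary operator, extends `V`,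
is a minimal unitary extension of `V`, and maps `{(δ,0,0)}` onto `{(0, δ·e₀, 0)}` and
`{(0,0,δ*·e₀)}` onto `{(δ*,0,0)}`. -/
theorem stmt_15 {H0 : Type*}
    [NormedAddCommGroup H0] [InnerProductSpace ℂ H0] [CompleteSpace H0]
    (D Dst : Submodule ℂ H0) [CompleteSpace D] [CompleteSpace Dst]
    (V : D ≃ₗᵢ[ℂ] Dst)
    (W : (H0 × lp (fun _ : ℕ => Dᗮ) 2 × lp (fun _ : ℕ => Dstᗮ) 2) →L[ℂ]
         (H0 × lp (fun _ : ℕ => Dᗮ) 2 × lp (fun _ : ℕ => Dstᗮ) 2))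
    (hW : ∀ p : H0 × lp (fun _ : ℕ => Dᗮ) 2 × lp (fun _ : ℕ => Dstᗮ) 2,
      (W p).1 = ((V (D.orthogonalProjectionOnto p.1) : Dst) : H0) + ((p.2.2 0 : Dstᗮ) : H0) ∧
      (W p).2.1 0 = Dᗮ.orthogonalProjectionOnto p.1 ∧
      (∀ n : ℕ, (W p).2.1 (n + 1) = p.2.1 n) ∧
      (∀ n : ℕ, (W p).2.2 n = p.2.2 (n + 1))) :
    -- (i) `W` is a unitary operator on `K0`
    ((∀ p : H0 × lp (fun _ : ℕ => Dᗮ) 2 × lp (fun _ : ℕ => Dstᗮ) 2,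
        ‖(W p).1‖ ^ 2 + ‖(W p).2.1‖ ^ 2 + ‖(W p).2.2‖ ^ 2
          = ‖p.1‖ ^ 2 + ‖p.2.1‖ ^ 2 + ‖p.2.2‖ ^ 2) ∧
      Function.Surjective W) ∧
    -- (ii) `W` extends `V`
    (∀ d : D, W ((d : H0), 0, 0) = (((V d : Dst) : H0), 0, 0)) ∧
    -- (iii) `W` is a minimal unitary extension of `V`
    (∀ S : Submodule ℂ (H0 × lp (fun _ : ℕ => Dᗮ) 2 × lp (fun _ : ℕ => Dstᗮ) 2),
        IsClosed (S : Set (H0 × lp (fun _ : ℕ => Dᗮ) 2 × lp (fun _ : ℕ => Dstᗮ) 2)) →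
        (∀ h : H0, (h, (0 : lp (fun _ : ℕ => Dᗮ) 2), (0 : lp (fun _ : ℕ => Dstᗮ) 2)) ∈ S) →
        (∀ p ∈ S, W p ∈ S) →
        (∀ p, W p ∈ S → p ∈ S) →
        S = ⊤) ∧
    -- (iv) the subspace identities
    (W '' {p : H0 × lp (fun _ : ℕ => Dᗮ) 2 × lp (fun _ : ℕ => Dstᗮ) 2 |
          ∃ δ : Dᗮ, p = ((δ : H0), 0, 0)}
        = {p : H0 × lp (fun _ : ℕ => Dᗮ) 2 × lp (fun _ : ℕ => Dstᗮ) 2 |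
          ∃ δ : Dᗮ, p = (0, (lp.single 2 0 δ : lp (fun _ : ℕ => Dᗮ) 2), 0)} ∧
      W '' {p : H0 × lp (fun _ : ℕ => Dᗮ) 2 × lp (fun _ : ℕ => Dstᗮ) 2 |
          ∃ ε : Dstᗮ, p = (0, 0, (lp.single 2 0 ε : lp (fun _ : ℕ => Dstᗮ) 2))}
        = {p : H0 × lp (fun _ : ℕ => Dᗮ) 2 × lp (fun _ : ℕ => Dstᗮ) 2 |
          ∃ ε : Dstᗮ, p = ((ε : H0), 0, 0)}) :=
  stmt_15_general D Dst V W hW
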